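/- Let G = P_{n−2} ∨ K̄_2 be the join of the path on n−2 vertices with two isolated vertices, where n ≥ 6. Then Δ(G) = n − 2 and the only perfect dominating set of G is V(G), hence γ_{11}(G) = n. -/

import Mathlib

/-- `S` is a `k`-quasiperfect dominating set of `G`: every vertex not in `S` has
at least one and at most `k` neighbors in `S`. -/
def IsQPDomSet {V : Type*} (G : SimpleGraph V) (k : ℕ) (S : Set V) : Prop :=
  ∀ v ∉ S, 1 ≤ (S ∩ G.neighborSet v).ncard ∧ (S ∩ G.neighborSet v).ncard ≤ k

/-- The `k`-quasiperfect domination number `γ_{1k}(G)`. -/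
noncomputable def qpNum {V : Type*} (G : SimpleGraph V) (k : ℕ) : ℕ :=
  sInf {m | ∃ S : Set V, IsQPDomSet G k S ∧ S.ncard = m}

/-- `S` is a perfect dominating set: every vertex not in `S` has exactly one neighbor in `S`. -/
def IsPerfDomSet {V : Type*} (G : SimpleGraph V) (S : Set V) : Prop :=
  ∀ v ∉ S, (S ∩ G.neighborSet v).ncard = 1

/-- The perfect domination number `γ_{11}(G)`. -/
noncomputable def perfDomNum {V : Type*} (G : SimpleGraph V) : ℕ :=
  sInf {m | ∃ S : Set V, IsPerfDomSet G S ∧ S.ncard = m}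

/-- The domination number `γ(G)`. -/
noncomputable def domNum {V : Type*} (G : SimpleGraph V) : ℕ :=
  sInf {m | ∃ S : Set V, (∀ v ∉ S, ∃ u ∈ S, G.Adj v u) ∧ S.ncard = m}

/-- The maximum degree `Δ(G)`. -/
noncomputable def maxDeg {V : Type*} (G : SimpleGraph V) : ℕ :=
  sSup {d | ∃ v, (G.neighborSet v).ncard = d}

/-- The minimum degree `δ(G)`. -/
noncomputable def minDeg {V : Type*} (G : SimpleGraph V) : ℕ :=
  sInf {d | ∃ v, (G.neighborSet v).ncard = d}

/-- The join `G₁ ∨ G₂`: disjoint union plus all edges between the two parts. -/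
def joinG {α β : Type*} (G₁ : SimpleGraph α) (G₂ : SimpleGraph β) : SimpleGraph (α ⊕ β) :=
  SimpleGraph.fromRel (fun u v =>
    match u, v with
    | Sum.inl a, Sum.inl b => G₁.Adj a b
    | Sum.inr a, Sum.inr b => G₂.Adj a b
    | _, _ => True)

/-!
If an outer vertex `inr j` of `G₁ ∨ K̄₂` is outside a perfect dominating set `S`, its unique
`S`-neighbour is an inner vertex `inl a`, the only inner vertex of `S`. A non-neighbour `inl b` of
`inl a` must then be dominated by the other outer vertex, and a neighbour `inl a'` of `inl a` is
dominated twice. So both outer vertices lie in `S`, and then every inner vertex outside `S` would be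
dominated twice. The path on `n - 2 ≥ 4` vertices has neither isolated nor dominating vertices.
-/

namespace SimpleGraph

variable {V : Type*} {G : SimpleGraph V} {S : Set V} {v : V}

lemma ncard_neighborSet_le_of_compl_adj [Finite V] {w : V} (h : Gᶜ.Adj v w) :
    (G.neighborSet v).ncard ≤ Nat.card V - 2 := by
  have hdisj : Disjoint (G.neighborSet v) {v, w} := by
    refine Set.disjoint_left.2 fun u hu hvw => ?_
    rcases hvw with rfl | rfl
    · exact hu.ne rfl
    · exact h.2 hu
  have := Set.ncard_le_ncard (Set.subset_univ (G.neighborSet v ∪ {v, w}))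
  rw [Set.ncard_union_eq hdisj, Set.ncard_pair h.ne, Set.ncard_univ] at this
  omega

lemma pathGraph_exists_adj {m : ℕ} (hm : 2 ≤ m) (a : Fin m) : ∃ b, (pathGraph m).Adj a b := by
  simp only [pathGraph_adj]
  by_cases ha : a.val + 1 < m
  · exact ⟨⟨a.val + 1, ha⟩, Or.inl rfl⟩
  · exact ⟨⟨a.val - 1, by omega⟩, Or.inr (by dsimp only; omega)⟩

lemma pathGraph_compl_exists_adj {m : ℕ} (hm : 4 ≤ m) (a : Fin m) :
    ∃ b, (pathGraph m)ᶜ.Adj a b := by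
  simp only [compl_adj, pathGraph_adj, ne_eq, Fin.ext_iff]
  by_cases ha : 2 ≤ a.val
  · exact ⟨⟨0, by omega⟩, by dsimp only; omega⟩
  · exact ⟨⟨3, by omega⟩, by dsimp only; omega⟩

lemma maxDeg_eq_of_le {d : ℕ} (hle : ∀ v, (G.neighborSet v).ncard ≤ d)
    (hd : (G.neighborSet v).ncard = d) : maxDeg G = d :=
  le_antisymm (csSup_le ⟨d, v, hd⟩ fun _ ⟨u, hu⟩ => hu ▸ hle u)
    (le_csSup ⟨d, fun _ ⟨u, hu⟩ => hu ▸ hle u⟩ ⟨v, hd⟩)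

lemma isPerfDomSet_univ : IsPerfDomSet G Set.univ :=
  fun v hv => absurd (Set.mem_univ v) hv

lemma IsPerfDomSet.exists_adj (hS : IsPerfDomSet G S) (hv : v ∉ S) : ∃ x ∈ S, G.Adj v x := by
  obtain ⟨x, hx⟩ := Set.ncard_eq_one.1 (hS v hv)
  have hxS : x ∈ S ∩ G.neighborSet v := hx ▸ Set.mem_singleton x
  exact ⟨x, hxS.1, hxS.2⟩

lemma IsPerfDomSet.eq_of_adj (hS : IsPerfDomSet G S) (hv : v ∉ S) {x y : V} (hx : x ∈ S)
    (hy : y ∈ S) (hvx : G.Adj v x) (hvy : G.Adj v y) : x = y := by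
  obtain ⟨z, hz⟩ := Set.ncard_eq_one.1 (hS v hv)
  have hxz : x ∈ ({z} : Set V) := hz ▸ ⟨hx, hvx⟩
  have hyz : y ∈ ({z} : Set V) := hz ▸ ⟨hy, hvy⟩
  exact hxz.trans hyz.symm

lemma perfDomNum_eq_card [Finite V] (h : ∀ S, IsPerfDomSet G S → S = Set.univ) :
    perfDomNum G = Nat.card V := by
  have hset : {m | ∃ S : Set V, IsPerfDomSet G S ∧ S.ncard = m} = {Nat.card V} := by
    ext m
    constructor
    · rintro ⟨S, hS, rfl⟩
      rw [h S hS, Set.ncard_univ, Set.mem_singleton_iff]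
    · rintro rfl
      exact ⟨Set.univ, isPerfDomSet_univ, Set.ncard_univ V⟩
  rw [perfDomNum, hset, csInf_singleton]

end SimpleGraph

section Join

open Sum SimpleGraph

variable {α β : Type*} {G₁ : SimpleGraph α} {G₂ : SimpleGraph β}

@[simp] lemma joinG_adj_inl_inl {a b : α} : (joinG G₁ G₂).Adj (inl a) (inl b) ↔ G₁.Adj a b := by
  simp only [joinG, fromRel_adj, ne_eq, inl.injEq]
  exact ⟨fun ⟨_, h⟩ => h.elim id fun h => h.symm, fun h => ⟨h.ne, Or.inl h⟩⟩

@[simp] lemma joinG_adj_inr_inr {a b : β} : (joinG G₁ G₂).Adj (inr a) (inr b) ↔ G₂.Adj a b := by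
  simp only [joinG, fromRel_adj, ne_eq, inr.injEq]
  exact ⟨fun ⟨_, h⟩ => h.elim id fun h => h.symm, fun h => ⟨h.ne, Or.inl h⟩⟩

@[simp] lemma joinG_adj_inl_inr {a : α} {b : β} : (joinG G₁ G₂).Adj (inl a) (inr b) := by
  simp [joinG, fromRel_adj]

@[simp] lemma joinG_adj_inr_inl {a : α} {b : β} : (joinG G₁ G₂).Adj (inr b) (inl a) :=
  joinG_adj_inl_inr.symm

lemma joinG_bot_neighborSet_inr (b : β) :
    (joinG G₁ (⊥ : SimpleGraph β)).neighborSet (inr b) = Set.range inl := by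
  ext (a | b') <;> simp

lemma eq_univ_of_isPerfDomSet_joinG_bot [Nontrivial β] (hadj : ∀ a, ∃ b, G₁.Adj a b)
    (hcompl : ∀ a, ∃ b, G₁ᶜ.Adj a b) {S : Set (α ⊕ β)}
    (hS : IsPerfDomSet (joinG G₁ (⊥ : SimpleGraph β)) S) : S = Set.univ := by
  have hinr : ∀ j, inr j ∈ S := by
    intro j
    by_contra hj
    obtain ⟨a | _, haS, hja⟩ := hS.exists_adj hj
    swap
    · simp at hja
    have honly : ∀ {c}, inl c ∈ S → c = a := fun hc =>
      inl_injective (hS.eq_of_adj hj hc haS joinG_adj_inr_inl joinG_adj_inr_inl)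
    obtain ⟨b, hb⟩ := hcompl a
    obtain ⟨c | k, hcS, hbc⟩ := hS.exists_adj (v := inl b) fun h => hb.ne (honly h).symm
    · exact hb.2 (honly hcS ▸ (joinG_adj_inl_inl.1 hbc).symm)
    obtain ⟨a', ha'⟩ := hadj a
    exact inl_ne_inr <| hS.eq_of_adj (v := inl a') (fun h => ha'.ne (honly h).symm) haS hcS
      (joinG_adj_inl_inl.2 ha'.symm) joinG_adj_inl_inr
  obtain ⟨j₁, j₂, hj⟩ := exists_pair_ne β
  refine Set.eq_univ_of_forall fun | inr j => hinr j | inl i => ?_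
  by_contra hi
  exact hj (inr_injective (hS.eq_of_adj hi (hinr j₁) (hinr j₂) joinG_adj_inl_inr
    joinG_adj_inl_inr))

lemma maxDeg_joinG_bot_fin_two [Finite α] (hcompl : ∀ a, ∃ b, G₁ᶜ.Adj a b) :
    maxDeg (joinG G₁ (⊥ : SimpleGraph (Fin 2))) = Nat.card α := by
  refine maxDeg_eq_of_le (v := inr 0) (fun v => ?_) ?_
  · rcases v with a | j
    · obtain ⟨b, hb⟩ := hcompl a
      have := ncard_neighborSet_le_of_compl_adj (G := joinG G₁ (⊥ : SimpleGraph (Fin 2)))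
        (v := inl a) (w := inl b) ⟨by simpa using hb.ne, by simpa using hb.2⟩
      simpa using this
    · rw [joinG_bot_neighborSet_inr, Set.ncard_range_of_injective inl_injective]
  · rw [joinG_bot_neighborSet_inr, Set.ncard_range_of_injective inl_injective]

end Join

theorem stmt_10 (n : ℕ) (hn : 6 ≤ n) :
    maxDeg (joinG (SimpleGraph.pathGraph (n - 2)) (⊥ : SimpleGraph (Fin 2))) = n - 2 ∧
    (∀ S : Set (Fin (n - 2) ⊕ Fin 2),
      IsPerfDomSet (joinG (SimpleGraph.pathGraph (n - 2)) (⊥ : SimpleGraph (Fin 2))) S →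
      S = Set.univ) ∧
    perfDomNum (joinG (SimpleGraph.pathGraph (n - 2)) (⊥ : SimpleGraph (Fin 2))) = n := by
  have hadj := SimpleGraph.pathGraph_exists_adj (m := n - 2) (by omega)
  have hcompl := SimpleGraph.pathGraph_compl_exists_adj (m := n - 2) (by omega)
  have huniv := fun S => eq_univ_of_isPerfDomSet_joinG_bot (β := Fin 2) (S := S) hadj hcompl
  refine ⟨by simpa using maxDeg_joinG_bot_fin_two hcompl, huniv, ?_⟩
  rw [SimpleGraph.perfDomNum_eq_card huniv, Nat.card_sum]
  simp only [Nat.card_eq_fintype_card, Fintype.card_fin]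
  omega
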